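/- Let A be an n-dimensional k-algebra. There exists a unique bialgebra structure on the universal algebra a(A) such that η_A : A → A ⊗ a(A) makes A a right a(A)-comodule algebra; explicitly, the comultiplication and counit are determined by Δ(x_{ij}) = Σ_{s=1}^n x_{is} ⊗ x_{sj} and ε(x_{ij}) = δ_{i,j}. -/

import Mathlib

open TensorProduct

noncomputable section

variable (k : Type) [Field k]

/-- The relations defining the quantum symmetry semigroup `a(A)` of a finite dimensional
algebra `A` with basis `e` (with `e 0 = 1`), in terms of the structure constants
`τ i j s = e.repr (e i * e j) s`. -/
inductive ARel {A : Type} [Ring A] [Algebra k A] {n : ℕ} [NeZero n]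
    (e : Module.Basis (Fin n) k A) :
    FreeAlgebra k (Fin n × Fin n) → FreeAlgebra k (Fin n × Fin n) → Prop
  | mul (a i j : Fin n) :
      ARel e (∑ u, e.repr (e i * e j) u • FreeAlgebra.ι k (a, u))
        (∑ s, ∑ t, e.repr (e s * e t) a • (FreeAlgebra.ι k (s, i) * FreeAlgebra.ι k (t, j)))
  | unit (a : Fin n) :
      ARel e (FreeAlgebra.ι k (a, (0 : Fin n))) (if a = 0 then 1 else 0)

/-- The quantum symmetry semigroup `a(A)`. -/
abbrev aA {A : Type} [Ring A] [Algebra k A] {n : ℕ} [NeZero n] (e : Module.Basis (Fin n) k A) :=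
  RingQuot (ARel k e)

/-- The generators `x_{s i}` of `a(A)`. -/
def xg {A : Type} [Ring A] [Algebra k A] {n : ℕ} [NeZero n] (e : Module.Basis (Fin n) k A)
    (s i : Fin n) : aA k e :=
  RingQuot.mkAlgHom k (ARel k e) (FreeAlgebra.ι k (s, i))

/-- The canonical map `η_A : A → A ⊗ a(A)`, `e i ↦ ∑ s, e s ⊗ x_{s i}`, as a linear map. -/
def etaA {A : Type} [Ring A] [Algebra k A] {n : ℕ} [NeZero n] (e : Module.Basis (Fin n) k A) :
    A →ₗ[k] A ⊗[k] aA k e :=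
  (e.constr k) fun i => ∑ s, e s ⊗ₜ[k] xg k e s i


variable {A : Type} [Ring A] [Algebra k A] {n : ℕ} [NeZero n]

/-- A pair `(Δ, ε)` of algebra maps is a bialgebra structure on `a(A)` making
`η_A : A → A ⊗ a(A)` into a right `a(A)`-comodule (algebra) structure. -/
def IsUniversalBialgStructure (e : Module.Basis (Fin n) k A)
    (Δ : aA k e →ₐ[k] aA k e ⊗[k] aA k e) (ε : aA k e →ₐ[k] k) : Prop :=
  -- `Δ` is coassociative
  (∀ z, TensorProduct.map Δ.toLinearMap LinearMap.id (Δ z) =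
      (TensorProduct.assoc k (aA k e) (aA k e) (aA k e)).symm
        (TensorProduct.map LinearMap.id Δ.toLinearMap (Δ z))) ∧
  -- `ε` is a left and right counit for `Δ`
  (∀ z, TensorProduct.map ε.toLinearMap LinearMap.id (Δ z) = (1 : k) ⊗ₜ[k] z) ∧
  (∀ z, TensorProduct.map LinearMap.id ε.toLinearMap (Δ z) = z ⊗ₜ[k] (1 : k)) ∧
  -- `η_A` is a coassociative coaction
  (∀ x : A, TensorProduct.map LinearMap.id Δ.toLinearMap (etaA k e x) =
      (TensorProduct.assoc k A (aA k e) (aA k e))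
        (TensorProduct.map (etaA k e) LinearMap.id (etaA k e x))) ∧
  -- `η_A` is counital
  (∀ x : A, TensorProduct.map LinearMap.id ε.toLinearMap (etaA k e x) = x ⊗ₜ[k] (1 : k))

section Aux

variable (e : Module.Basis (Fin n) k A)

lemma relA_mul (a i j : Fin n) :
    ∑ u, e.repr (e i * e j) u • xg k e a u =
      ∑ s, ∑ t, e.repr (e s * e t) a • (xg k e s i * xg k e t j) := by
  have h := RingQuot.mkAlgHom_rel k (ARel.mul (k := k) (e := e) a i j)
  simpa [xg, map_sum, map_smul, map_mul] using h

lemma relA_unit (a : Fin n) : xg k e a 0 = if a = 0 then (1 : aA k e) else 0 := by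
  have h := RingQuot.mkAlgHom_rel k (ARel.unit (k := k) (e := e) a)
  simpa [xg, apply_ite (RingQuot.mkAlgHom k (ARel k e))] using h

lemma aA_hom_ext {C : Type} [Semiring C] [Algebra k C] {f g : aA k e →ₐ[k] C}
    (h : ∀ s i, f (xg k e s i) = g (xg k e s i)) : f = g := by
  apply RingQuot.ringQuot_ext'
  apply FreeAlgebra.hom_ext
  funext p
  simpa [xg] using h p.1 p.2

end Aux


section Aux2

variable (e : Module.Basis (Fin n) k A)

lemma sum3_comm {β : Type} [AddCommMonoid β] (f : Fin n → Fin n → Fin n → β) :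
    ∑ u, ∑ v, ∑ w, f u v w = ∑ w, ∑ u, ∑ v, f u v w :=
  (Finset.sum_congr rfl fun _ _ => Finset.sum_comm).trans Finset.sum_comm

lemma sum4_comm {β : Type} [AddCommMonoid β] (f : Fin n → Fin n → Fin n → Fin n → β) :
    ∑ s, ∑ t, ∑ u, ∑ v, f s t u v = ∑ u, ∑ v, ∑ s, ∑ t, f s t u v := by
  calc ∑ s, ∑ t, ∑ u, ∑ v, f s t u v
      = ∑ s, ∑ u, ∑ t, ∑ v, f s t u v :=
        Finset.sum_congr rfl fun _ _ => Finset.sum_comm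
    _ = ∑ u, ∑ s, ∑ t, ∑ v, f s t u v := Finset.sum_comm
    _ = ∑ u, ∑ s, ∑ v, ∑ t, f s t u v :=
        Finset.sum_congr rfl fun _ _ => Finset.sum_congr rfl fun _ _ => Finset.sum_comm
    _ = ∑ u, ∑ v, ∑ s, ∑ t, f s t u v :=
        Finset.sum_congr rfl fun _ _ => Finset.sum_comm

/-- `ε` on the free algebra. -/
def EpsFun : FreeAlgebra k (Fin n × Fin n) →ₐ[k] k :=
  FreeAlgebra.lift k fun p => if p.1 = p.2 then 1 else 0

lemma EpsFun_rel : ∀ ⦃x y⦄, ARel k e x y → EpsFun k x = EpsFun k y := by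
  intro x y h
  induction h with
  | mul a i j =>
      simp [EpsFun, mul_ite, ite_mul, smul_eq_mul, Finset.sum_ite_eq', mul_comm]
  | unit a =>
      by_cases h : a = 0 <;> simp [EpsFun, h]

/-- `Δ` on the free algebra. -/
def DeltaFun : FreeAlgebra k (Fin n × Fin n) →ₐ[k] aA k e ⊗[k] aA k e :=
  FreeAlgebra.lift k fun p => ∑ t, xg k e p.1 t ⊗ₜ[k] xg k e t p.2

lemma DeltaFun_rel : ∀ ⦃x y⦄, ARel k e x y → DeltaFun k e x = DeltaFun k e y := by
  intro x y h
  induction h with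
  | mul a i j =>
      simp only [DeltaFun, map_sum, map_smul, map_mul, FreeAlgebra.lift_ι_apply]
      have L : ∑ u, e.repr (e i * e j) u • ∑ v, xg k e a v ⊗ₜ[k] xg k e v u
          = ∑ w, ∑ u, ∑ v, e.repr (e u * e v) w •
              (xg k e a w ⊗ₜ[k] (xg k e u i * xg k e v j)) := by
        calc ∑ u, e.repr (e i * e j) u • ∑ v, xg k e a v ⊗ₜ[k] xg k e v u
            = ∑ v, xg k e a v ⊗ₜ[k] (∑ u, e.repr (e i * e j) u • xg k e v u) := by
              simp_rw [Finset.smul_sum]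
              rw [Finset.sum_comm]
              simp [TensorProduct.tmul_sum, TensorProduct.tmul_smul]
          _ = ∑ v, xg k e a v ⊗ₜ[k]
                (∑ s, ∑ t, e.repr (e s * e t) v • (xg k e s i * xg k e t j)) := by
              simp_rw [relA_mul]
          _ = ∑ w, ∑ u, ∑ v, e.repr (e u * e v) w •
                (xg k e a w ⊗ₜ[k] (xg k e u i * xg k e v j)) := by
              simp [TensorProduct.tmul_sum, TensorProduct.tmul_smul]
      have R : ∑ s, ∑ t, e.repr (e s * e t) a •
            ((∑ u, xg k e s u ⊗ₜ[k] xg k e u i) * (∑ v, xg k e t v ⊗ₜ[k] xg k e v j))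
          = ∑ w, ∑ u, ∑ v, e.repr (e u * e v) w •
              (xg k e a w ⊗ₜ[k] (xg k e u i * xg k e v j)) := by
        calc ∑ s, ∑ t, e.repr (e s * e t) a •
              ((∑ u, xg k e s u ⊗ₜ[k] xg k e u i) * (∑ v, xg k e t v ⊗ₜ[k] xg k e v j))
            = ∑ u, ∑ v, (∑ s, ∑ t, e.repr (e s * e t) a • (xg k e s u * xg k e t v))
                ⊗ₜ[k] (xg k e u i * xg k e v j) := by
              simp_rw [Finset.sum_mul_sum, Algebra.TensorProduct.tmul_mul_tmul,
                Finset.smul_sum, TensorProduct.sum_tmul, TensorProduct.smul_tmul']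
              exact sum4_comm _
          _ = ∑ u, ∑ v, (∑ w, e.repr (e u * e v) w • xg k e a w)
                ⊗ₜ[k] (xg k e u i * xg k e v j) := by
              simp_rw [relA_mul]
          _ = ∑ u, ∑ v, ∑ w, e.repr (e u * e v) w •
                (xg k e a w ⊗ₜ[k] (xg k e u i * xg k e v j)) := by
              simp [TensorProduct.sum_tmul, TensorProduct.smul_tmul']
          _ = ∑ w, ∑ u, ∑ v, e.repr (e u * e v) w •
                (xg k e a w ⊗ₜ[k] (xg k e u i * xg k e v j)) := sum3_comm _
      rw [L, R]
  | unit a =>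
      have h1 : DeltaFun k e (FreeAlgebra.ι k (a, (0 : Fin n)))
          = xg k e a 0 ⊗ₜ[k] (1 : aA k e) := by
        simp only [DeltaFun, FreeAlgebra.lift_ι_apply]
        calc ∑ t, xg k e a t ⊗ₜ[k] xg k e t 0
            = ∑ t, if t = 0 then xg k e a t ⊗ₜ[k] (1 : aA k e) else 0 := by
              refine Finset.sum_congr rfl fun t _ => ?_
              rw [relA_unit, TensorProduct.tmul_ite]
          _ = xg k e a 0 ⊗ₜ[k] (1 : aA k e) := by rw [Finset.sum_ite_eq']; simp
      rw [h1, relA_unit]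
      by_cases h : a = 0 <;> simp [h, Algebra.TensorProduct.one_def]

end Aux2


section Aux3

variable (e : Module.Basis (Fin n) k A)

/-- The comultiplication on `a(A)`. -/
def DeltaA : aA k e →ₐ[k] aA k e ⊗[k] aA k e :=
  RingQuot.liftAlgHom k ⟨DeltaFun k e, DeltaFun_rel k e⟩

/-- The counit on `a(A)`. -/
def EpsA : aA k e →ₐ[k] k :=
  RingQuot.liftAlgHom k ⟨EpsFun k, EpsFun_rel k e⟩

@[simp] lemma DeltaA_xg (i j : Fin n) :
    DeltaA k e (xg k e i j) = ∑ s, xg k e i s ⊗ₜ[k] xg k e s j := by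
  simp [DeltaA, xg, RingQuot.liftAlgHom_mkAlgHom_apply, DeltaFun]

@[simp] lemma EpsA_xg (i j : Fin n) :
    EpsA k e (xg k e i j) = if i = j then 1 else 0 := by
  simp [EpsA, xg, RingQuot.liftAlgHom_mkAlgHom_apply, EpsFun]

lemma etaA_basis (i : Fin n) : etaA k e (e i) = ∑ s, e s ⊗ₜ[k] xg k e s i :=
  Module.Basis.constr_basis e k _ i

lemma tensor_coords {M : Type} [AddCommMonoid M] [Module k M] (m m' : Fin n → M)
    (h : ∑ s, e s ⊗ₜ[k] m s = ∑ s, e s ⊗ₜ[k] m' s) (i : Fin n) : m i = m' i := by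
  have h2 := congrArg
    (fun z => (TensorProduct.lid k M) (TensorProduct.map (e.coord i) LinearMap.id z)) h
  simpa [map_sum, Module.Basis.coord_apply, Module.Basis.repr_self_apply, ite_smul,
    Finset.sum_ite_eq'] using h2

lemma mapL {B C D : Type} [Semiring B] [Algebra k B] [Semiring C] [Algebra k C]
    [Semiring D] [Algebra k D] (f : B →ₐ[k] C) :
    TensorProduct.map f.toLinearMap (LinearMap.id : D →ₗ[k] D)
      = (Algebra.TensorProduct.map f (AlgHom.id k D)).toLinearMap :=
  TensorProduct.ext' fun x y => by simp

lemma mapR {B C D : Type} [Semiring B] [Algebra k B] [Semiring C] [Algebra k C]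
    [Semiring D] [Algebra k D] (f : B →ₐ[k] C) :
    TensorProduct.map (LinearMap.id : D →ₗ[k] D) f.toLinearMap
      = (Algebra.TensorProduct.map (AlgHom.id k D) f).toLinearMap :=
  TensorProduct.ext' fun x y => by simp

end Aux3


section Aux4

variable (e : Module.Basis (Fin n) k A)

set_option synthInstance.maxHeartbeats 800000 in
set_option maxHeartbeats 1600000 in
lemma isUniv : IsUniversalBialgStructure k e (DeltaA k e) (EpsA k e) := by
  refine ⟨?_, ?_, ?_, ?_, ?_⟩
  · -- coassociativity
    have hF : (Algebra.TensorProduct.map (DeltaA k e) (AlgHom.id k (aA k e))).comp (DeltaA k e)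
        = ((Algebra.TensorProduct.assoc k k k (aA k e) (aA k e) (aA k e)).symm.toAlgHom).comp
            ((Algebra.TensorProduct.map (AlgHom.id k (aA k e)) (DeltaA k e)).comp
              (DeltaA k e)) := by
      apply aA_hom_ext
      intro i j
      simp only [AlgHom.comp_apply, DeltaA_xg, map_sum, Algebra.TensorProduct.map_tmul,
        AlgHom.id_apply, AlgEquiv.toAlgHom_eq_coe, AlgHom.coe_coe]
      simp only [DeltaA_xg, TensorProduct.sum_tmul, TensorProduct.tmul_sum, map_sum,
        Algebra.TensorProduct.assoc_symm_tmul]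
      exact Finset.sum_comm
    intro z
    have h3 := AlgHom.congr_fun hF z
    simp only [AlgHom.comp_apply] at h3
    rw [_root_.mapL, _root_.mapR]
    exact h3
  · -- left counit
    intro z
    have hF : (Algebra.TensorProduct.map (EpsA k e) (AlgHom.id k (aA k e))).comp (DeltaA k e)
        = Algebra.TensorProduct.includeRight := by
      apply aA_hom_ext
      intro i j
      simp [TensorProduct.ite_tmul, Finset.sum_ite_eq]
    have h3 := AlgHom.congr_fun hF z
    simp only [AlgHom.comp_apply, Algebra.TensorProduct.includeRight_apply] at h3
    rw [_root_.mapL]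
    exact h3
  · -- right counit
    intro z
    have hF : (Algebra.TensorProduct.map (AlgHom.id k (aA k e)) (EpsA k e)).comp (DeltaA k e)
        = Algebra.TensorProduct.includeLeft := by
      apply aA_hom_ext
      intro i j
      simp [TensorProduct.tmul_ite, Finset.sum_ite_eq']
    have h3 := AlgHom.congr_fun hF z
    simp only [AlgHom.comp_apply, Algebra.TensorProduct.includeLeft_apply] at h3
    rw [_root_.mapR]
    exact h3
  · -- coassociativity of the coaction
    have hL : (TensorProduct.map LinearMap.id (DeltaA k e).toLinearMap) ∘ₗ (etaA k e)
        = (TensorProduct.assoc k A (aA k e) (aA k e)).toLinearMap ∘ₗ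
            (TensorProduct.map (etaA k e) LinearMap.id) ∘ₗ (etaA k e) := by
      apply Module.Basis.ext e
      intro j
      simp only [LinearMap.comp_apply, etaA_basis, map_sum, TensorProduct.map_tmul,
        LinearMap.id_coe, id_eq, AlgHom.toLinearMap_apply, DeltaA_xg,
        TensorProduct.tmul_sum, TensorProduct.sum_tmul, LinearEquiv.coe_coe,
        TensorProduct.assoc_tmul]
      exact Finset.sum_comm
    intro x
    simpa using LinearMap.congr_fun hL x
  · -- counit property of the coaction
    have hL : (TensorProduct.map LinearMap.id (EpsA k e).toLinearMap) ∘ₗ (etaA k e)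
        = (TensorProduct.mk k A k).flip 1 := by
      apply Module.Basis.ext e
      intro j
      simp only [LinearMap.comp_apply, etaA_basis, map_sum, TensorProduct.map_tmul,
        LinearMap.id_coe, id_eq, AlgHom.toLinearMap_apply, EpsA_xg,
        TensorProduct.tmul_ite, LinearMap.flip_apply, TensorProduct.mk_apply]
      rw [Finset.sum_ite_eq']
      simp
    intro x
    simpa using LinearMap.congr_fun hL x

set_option synthInstance.maxHeartbeats 800000 in
set_option maxHeartbeats 1600000 in
lemma univ_xg {Δ : aA k e →ₐ[k] aA k e ⊗[k] aA k e} {ε : aA k e →ₐ[k] k}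
    (h : IsUniversalBialgStructure k e Δ ε) :
    (∀ i j, Δ (xg k e i j) = ∑ s, xg k e i s ⊗ₜ[k] xg k e s j) ∧
      (∀ i j, ε (xg k e i j) = if i = j then 1 else 0) := by
  obtain ⟨-, -, -, h4, h5⟩ := h
  constructor
  · intro i j
    have hj := h4 (e j)
    rw [etaA_basis] at hj
    simp only [map_sum, TensorProduct.map_tmul, LinearMap.id_coe, id_eq, etaA_basis,
      TensorProduct.sum_tmul, LinearEquiv.coe_coe, TensorProduct.assoc_tmul,
      AlgHom.toLinearMap_apply] at hj
    rw [Finset.sum_comm] at hj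
    simp_rw [← TensorProduct.tmul_sum] at hj
    exact tensor_coords k e _ _ hj i
  · intro i j
    have hj := h5 (e j)
    rw [etaA_basis] at hj
    simp only [map_sum, TensorProduct.map_tmul, LinearMap.id_coe, id_eq,
      AlgHom.toLinearMap_apply] at hj
    have hj' : ∑ s, e s ⊗ₜ[k] ε (xg k e s j)
        = ∑ s, e s ⊗ₜ[k] (if s = j then (1 : k) else 0) := by
      rw [hj]
      simp [TensorProduct.tmul_ite, Finset.sum_ite_eq']
    exact tensor_coords k e _ _ hj' i

end Aux4


/-- There exists a unique bialgebra structure `(Δ, ε)` on `a(A)` such that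
`η_A` makes `A` into a right `a(A)`-comodule algebra; it is given on generators by
`Δ(x_{ij}) = ∑ s, x_{is} ⊗ x_{sj}` and `ε(x_{ij}) = δ_{ij}`. -/
theorem aA_bialgebra_structure (e : Module.Basis (Fin n) k A) (he : e 0 = 1) :
    (∃! p : (aA k e →ₐ[k] aA k e ⊗[k] aA k e) × (aA k e →ₐ[k] k),
        IsUniversalBialgStructure k e p.1 p.2) ∧
    (∀ (Δ : aA k e →ₐ[k] aA k e ⊗[k] aA k e) (ε : aA k e →ₐ[k] k),
        IsUniversalBialgStructure k e Δ ε →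
          (∀ i j, Δ (xg k e i j) = ∑ s, xg k e i s ⊗ₜ[k] xg k e s j) ∧
          (∀ i j, ε (xg k e i j) = if i = j then 1 else 0)) := by
  constructor
  · refine ⟨⟨DeltaA k e, EpsA k e⟩, isUniv k e, ?_⟩
    rintro ⟨Δ', ε'⟩ h
    obtain ⟨hΔ, hε⟩ := univ_xg k e h
    have h1 : Δ' = DeltaA k e := aA_hom_ext k e fun i j => by rw [hΔ, DeltaA_xg]
    have h2 : ε' = EpsA k e := aA_hom_ext k e fun i j => by rw [hε, EpsA_xg]
    exact Prod.ext h1 h2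
  · intro Δ ε h
    exact univ_xg k e h

end
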